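/- For configurations valued in {0,1,2} (width-3 strings) under flip dynamics (adjacent swaps of values differing by 1), two configurations are in the same sector if and only if they have the same number of sites of each type AND the same left-to-right subsequence of values in {0,2}. Equivalently, identifying values 0 and 2 as two species of vacancies and value 1 as a particle, any rearrangement of the particles among positions is achievable while the relative order of 0s and 2s is preserved. -/

import Mathlib

/-- A single flip: the values at two adjacent sites, which differ by exactly 1,
are swapped; all other sites are unchanged. -/
def FlipStep {N k : ℕ} (c c' : Fin N → Fin k) : Prop :=
  ∃ j j' : Fin N, j.val + 1 = j'.val ∧
    ((c j').val = (c j).val + 1 ∨ (c j).val = (c j').val + 1) ∧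
    c' j = c j' ∧ c' j' = c j ∧ ∀ i : Fin N, i ≠ j → i ≠ j' → c' i = c i

/-- Two configurations are in the same sector iff they are related by finitely many flips. -/
def SameSector {N k : ℕ} (c c' : Fin N → Fin k) : Prop :=
  Relation.ReflTransGen FlipStep c c'

open Finset

/-- The `{0,2}`-word of a width-3 configuration: the values at the sites not carrying a 1,
read from left to right. -/
def vacancyWord {N : ℕ} (c : Fin N → Fin 3) : List (Fin 3) :=
  ((List.finRange N).filter (fun j => c j ≠ 1)).map c

section AuxLemmas

variable {N : ℕ}

lemma card_filter_eq_length {p : Fin N → Prop} [DecidablePred p] :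
    (Finset.univ.filter p).card = ((List.finRange N).filter (fun j => decide (p j))).length := by
  have h : (Finset.univ : Finset (Fin N)).val = (List.finRange N : Multiset (Fin N)) := rfl
  rw [Finset.card, Finset.filter_val, h, Multiset.filter_coe, Multiset.coe_card]

lemma flipStep_symm {k : ℕ} {c c' : Fin N → Fin k} (h : FlipStep c c') : FlipStep c' c := by
  obtain ⟨j, j', hadj, hd, h1, h2, h3⟩ := h
  exact ⟨j, j', hadj, by rw [h1, h2]; tauto, h2.symm, h1.symm,
    fun i hi hi' => (h3 i hi hi').symm⟩

lemma finRange_split {j j' : Fin N} (hadj : j.val + 1 = j'.val) :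
    List.finRange N = (List.finRange N).take j.val ++
      ([j, j'] ++ (List.finRange N).drop (j.val + 2)) := by
  have h1 : (List.finRange N).drop j.val = j :: (List.finRange N).drop (j.val + 1) := by
    rw [List.drop_eq_getElem_cons (by simpa using j.isLt)]; simp
  have h2 : (List.finRange N).drop (j.val + 1) = j' :: (List.finRange N).drop (j.val + 2) := by
    rw [List.drop_eq_getElem_cons (by simpa using hadj ▸ j'.isLt)]
    simp; exact Fin.ext hadj
  conv_lhs => rw [← List.take_append_drop j.val (List.finRange N)]
  rw [h1, h2]; rfl

lemma mem_take_lt {i j : Fin N} (h : i ∈ (List.finRange N).take j.val) : i.val < j.val := by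
  rw [List.mem_iff_getElem] at h
  obtain ⟨k, hk, hget⟩ := h
  rw [List.getElem_take] at hget
  simp [Fin.ext_iff] at hk hget
  omega

lemma mem_drop_ge {i : Fin N} {n : ℕ} (h : i ∈ (List.finRange N).drop n) : n ≤ i.val := by
  rw [List.mem_iff_getElem] at h
  obtain ⟨k, hk, hget⟩ := h
  rw [List.getElem_drop] at hget
  simp [Fin.ext_iff] at hk hget
  omega

lemma vacancyWord_flip {c c' : Fin N → Fin 3} (h : FlipStep c c') :
    vacancyWord c = vacancyWord c' := by
  obtain ⟨j, j', hadj, hd, h1, h2, h3⟩ := h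
  have hT : ∀ i ∈ (List.finRange N).take j.val, c' i = c i := by
    intro i hi
    have hlt := mem_take_lt hi
    refine h3 i (fun e => by subst e; omega) (fun e => by subst e; omega)
  have hD : ∀ i ∈ (List.finRange N).drop (j.val + 2), c' i = c i := by
    intro i hi
    have hge := mem_drop_ge hi
    refine h3 i (fun e => by subst e; omega) (fun e => by subst e; omega)
  have hone : (c j = 1 ∧ c j' ≠ 1) ∨ (c j' = 1 ∧ c j ≠ 1) := by
    have a := (c j).isLt; have b := (c j').isLt
    simp only [Fin.ext_iff, Fin.val_one] at *
    omega
  have fT : ((List.finRange N).take j.val).filter (fun i => decide (c' i ≠ 1))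
      = ((List.finRange N).take j.val).filter (fun i => decide (c i ≠ 1)) :=
    List.filter_congr (fun x hx => by rw [hT x hx])
  have eT : ((((List.finRange N).take j.val)).filter (fun i => c i ≠ 1)).map c
      = ((((List.finRange N).take j.val)).filter (fun i => c' i ≠ 1)).map c' := by
    rw [fT]
    exact List.map_congr_left (fun x hx => (hT x (List.mem_of_mem_filter hx)).symm)
  have fD : ((List.finRange N).drop (j.val+2)).filter (fun i => decide (c' i ≠ 1))
      = ((List.finRange N).drop (j.val+2)).filter (fun i => decide (c i ≠ 1)) :=
    List.filter_congr (fun x hx => by rw [hD x hx])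
  have eD : ((((List.finRange N).drop (j.val+2))).filter (fun i => c i ≠ 1)).map c
      = ((((List.finRange N).drop (j.val+2))).filter (fun i => c' i ≠ 1)).map c' := by
    rw [fD]
    exact List.map_congr_left (fun x hx => (hD x (List.mem_of_mem_filter hx)).symm)
  have eM : (([j, j']).filter (fun i => c i ≠ 1)).map c
      = (([j, j']).filter (fun i => c' i ≠ 1)).map c' := by
    rcases hone with ⟨e1, e2⟩ | ⟨e1, e2⟩
    · have f1 : c' j ≠ 1 := by rw [h1]; exact e2
      have f2 : c' j' = 1 := by rw [h2]; exact e1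
      simp [List.filter_cons, e1, e2, f1, f2, h1]
    · have f1 : c' j = 1 := by rw [h1]; exact e1
      have f2 : c' j' ≠ 1 := by rw [h2]; exact e2
      simp [List.filter_cons, e1, e2, f1, f2, h2]
  unfold vacancyWord
  rw [finRange_split hadj]
  simp only [List.filter_append, List.map_append]
  rw [eT, eM, eD]

lemma counts_flip {c c' : Fin N → Fin 3} (h : FlipStep c c') (n : Fin 3) :
    (Finset.univ.filter (fun j => c j = n)).card =
      (Finset.univ.filter (fun j => c' j = n)).card := by
  obtain ⟨j, j', hadj, hd, h1, h2, h3⟩ := h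
  have hcc : ∀ i, c' i = c (Equiv.swap j j' i) := by
    intro i
    rcases eq_or_ne i j with rfl | hij
    · rw [Equiv.swap_apply_left]; exact h1
    rcases eq_or_ne i j' with rfl | hij'
    · rw [Equiv.swap_apply_right]; exact h2
    · rw [Equiv.swap_apply_of_ne_of_ne hij hij']; exact h3 i hij hij'
  refine Finset.card_equiv (Equiv.swap j j') ?_
  intro i
  simp only [Finset.mem_filter, Finset.mem_univ, true_and]
  rw [hcc, Equiv.swap_apply_self]

lemma sameSector_vacancyWord {c c' : Fin N → Fin 3} (h : SameSector c c') :
    vacancyWord c = vacancyWord c' := by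
  induction h with
  | refl => rfl
  | tail _ hstep ih => exact ih.trans (vacancyWord_flip hstep)

/-- A configuration is terminal if every `1` is followed only by `1`s. -/
def Terminal (c : Fin N → Fin 3) : Prop :=
  ∀ j : Fin N, c j = 1 → ∀ h : j.val + 1 < N, c ⟨j.val + 1, h⟩ = 1

/-- Measure decreasing along right-pushes of `1`s. -/
def phi (c : Fin N → Fin 3) : ℕ :=
  ∑ i ∈ Finset.univ.filter (fun i => c i = 1), (N - 1 - i.val)

lemma reach_terminal (c : Fin N → Fin 3) : ∃ d, SameSector c d ∧ Terminal d := by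
  generalize hn : phi c = n
  induction n using Nat.strong_induction_on generalizing c with
  | _ n ih =>
  by_cases hT : Terminal c
  · exact ⟨c, Relation.ReflTransGen.refl, hT⟩
  · unfold Terminal at hT
    push_neg at hT
    obtain ⟨j, hj1, hlt, hne⟩ := hT
    set j₂ : Fin N := ⟨j.val + 1, hlt⟩ with hj₂
    set σ := Equiv.swap j j₂ with hσ
    have hjne : j ≠ j₂ := by
      intro e; have := congrArg Fin.val e; simp [hj₂] at this
    set c₂ : Fin N → Fin 3 := fun i => c (σ i) with hc₂
    have hflip : FlipStep c c₂ := by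
      refine ⟨j, j₂, rfl, ?_, ?_, ?_, ?_⟩
      · have a := (c j₂).isLt
        have b : (c j).val = 1 := by rw [hj1]; rfl
        have d : (c j₂).val ≠ 1 := fun e => hne (Fin.ext (by simpa using e))
        omega
      · simp [hc₂, hσ, Equiv.swap_apply_left]
      · simp [hc₂, hσ, Equiv.swap_apply_right]
      · intro i hij hij₂
        simp [hc₂, hσ, Equiv.swap_apply_of_ne_of_ne hij hij₂]
    have hphi : phi c₂ < phi c := by
      have hS : phi c₂ = ∑ i ∈ Finset.univ.filter (fun i => c i = 1),
          (N - 1 - (σ i).val) := by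
        refine Finset.sum_equiv σ ?_ ?_
        · intro i; simp [hc₂]
        · intro i hi
          rw [hσ, Equiv.swap_apply_self]
      rw [hS]
      unfold phi
      refine Finset.sum_lt_sum ?_ ⟨j, ?_, ?_⟩
      · intro i hi
        simp only [Finset.mem_filter] at hi
        have hii : i ≠ j₂ := fun e => hne (e ▸ hi.2)
        rcases eq_or_ne i j with rfl | hij
        · rw [hσ, Equiv.swap_apply_left]; simp [hj₂]; omega
        · rw [hσ, Equiv.swap_apply_of_ne_of_ne hij hii]
      · simp [hj1]
      · rw [hσ, Equiv.swap_apply_left]; simp [hj₂]; omega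
    obtain ⟨d, hsd, htd⟩ := ih (phi c₂) (hn ▸ hphi) c₂ rfl
    exact ⟨d, Relation.ReflTransGen.head hflip hsd, htd⟩

lemma terminal_up {c : Fin N → Fin 3} (hc : Terminal c) :
    ∀ (d : ℕ) (i : Fin N) (h : i.val + d < N), c i = 1 → c ⟨i.val + d, h⟩ = 1 := by
  intro d
  induction d with
  | zero => intro i h h1; simpa using h1
  | succ d ihd =>
      intro i h h1
      have h' : i.val + d < N := by omega
      have := ihd i h' h1
      have := hc ⟨i.val + d, h'⟩ this (by omega)
      convert this using 2
      exact Fin.ext (Nat.add_assoc _ _ _).symm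

lemma terminal_key {c : Fin N → Fin 3} (hc : Terminal c) (j : Fin N) :
    c j ≠ 1 ↔ j.val < (vacancyWord c).length := by
  have hmlen : (vacancyWord c).length = (Finset.univ.filter (fun i => c i ≠ 1)).card := by
    rw [vacancyWord, List.length_map, card_filter_eq_length]
  set m := (vacancyWord c).length with hm
  set D := Finset.univ.filter (fun i => c i ≠ 1) with hD
  have hdc : ∀ i : Fin N, c i ≠ 1 → ∀ k : Fin N, k.val ≤ i.val → c k ≠ 1 := by
    intro i hi k hk h1
    have h' : k.val + (i.val - k.val) < N := by have := i.isLt; omega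
    have := terminal_up hc (i.val - k.val) k h' h1
    apply hi
    convert this using 2
    exact Fin.ext (by simp; omega)
  have hfwd : ∀ i : Fin N, c i ≠ 1 → i.val < m := by
    intro i hi
    have hsub : Finset.Iic i ⊆ D := by
      intro k hk
      simp only [Finset.mem_Iic] at hk
      simp only [hD, Finset.mem_filter, Finset.mem_univ, true_and]
      exact hdc i hi k hk
    have hcard : (Finset.Iic i).card = i.val + 1 := by
      simp [Fin.card_Iic]
    have := Finset.card_le_card hsub
    omega
  constructor
  · exact hfwd j
  · intro hj
    set F := Finset.univ.filter (fun i : Fin N => i.val < m) with hF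
    have hDF : D ⊆ F := by
      intro i hi
      simp only [hD, Finset.mem_filter, Finset.mem_univ, true_and] at hi
      simp only [hF, Finset.mem_filter, Finset.mem_univ, true_and]
      exact hfwd i hi
    have hcardF : F.card ≤ m := by
      have : F.card ≤ (Finset.range m).card := by
        refine Finset.card_le_card_of_injOn (fun i => i.val) ?_ ?_
        · intro a ha
          simpa [hF] using ha
        · intro a _ b _ hab
          exact Fin.ext hab
      simpa using this
    have hFD : D = F := Finset.eq_of_subset_of_card_le hDF (by rw [← hmlen]; exact hcardF)
    have : j ∈ F := by simp [hF, hj]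
    rw [← hFD] at this
    simpa [hD] using this

lemma terminal_eq {c c' : Fin N → Fin 3} (hc : Terminal c) (hc' : Terminal c')
    (hw : vacancyWord c = vacancyWord c') : c = c' := by
  have hm : (vacancyWord c).length = (vacancyWord c').length := by rw [hw]
  have key := terminal_key hc
  have key' : ∀ j : Fin N, c' j ≠ 1 ↔ j.val < (vacancyWord c).length := by
    intro j; rw [hm]; exact terminal_key hc' j
  have hfilter : (List.finRange N).filter (fun i => decide (c' i ≠ 1))
      = (List.finRange N).filter (fun i => decide (c i ≠ 1)) := by
    refine List.filter_congr ?_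
    intro x _
    exact decide_eq_decide.mpr ((key' x).trans (key x).symm)
  have hw2 : ((List.finRange N).filter (fun i => decide (c i ≠ 1))).map c
      = ((List.finRange N).filter (fun i => decide (c i ≠ 1))).map c' := by
    have := hw
    rw [vacancyWord, vacancyWord, hfilter] at this
    exact this
  have hmem := List.map_eq_map_iff.mp hw2
  funext j
  by_cases hj : c j = 1
  · have hj' : c' j = 1 := by
      by_contra hne
      exact ((key j).mpr ((key' j).mp hne)) hj
    rw [hj, hj']
  · exact hmem j (by simp [hj])

end AuxLemmas

/-- For width-3 strings (values in `{0,1,2}`), two configurations are in the same flip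
sector iff they have the same number of sites of each type and the same left-to-right
subsequence of `{0,2}` values. -/
theorem sameSector_iff_counts_and_vacancyWord {N : ℕ} (c c' : Fin N → Fin 3) :
    SameSector c c' ↔
      ((∀ n : Fin 3,
          (Finset.univ.filter (fun j => c j = n)).card =
            (Finset.univ.filter (fun j => c' j = n)).card) ∧
        vacancyWord c = vacancyWord c') := by
  constructor
  · intro h
    induction h with
    | refl => exact ⟨fun _ => rfl, rfl⟩
    | tail _ hstep ih =>
        exact ⟨fun n => (ih.1 n).trans (counts_flip hstep n), ih.2.trans (vacancyWord_flip hstep)⟩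
  · rintro ⟨-, hw⟩
    obtain ⟨d, hcd, hd⟩ := reach_terminal c
    obtain ⟨d', hcd', hd'⟩ := reach_terminal c'
    have hwd : vacancyWord d = vacancyWord d' := by
      rw [← sameSector_vacancyWord hcd, ← sameSector_vacancyWord hcd', hw]
    have : d = d' := terminal_eq hd hd' hwd
    subst this
    exact hcd.trans (by
      haveI : Std.Symm (@FlipStep N 3) := ⟨fun _ _ h => flipStep_symm h⟩
      exact Relation.ReflTransGen.symmetric.symm _ _ hcd')
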